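/- arXiv:1404.6624 — 2 statements merged into one kernel-verified Lean document; each statement's English description precedes it below -/
import Mathlib

section
/- Let N ≥ 3 be odd, k ≥ 0, and let Γ = {γ_1, …, γ_N} be a multiset of complex numbers invariant under negation containing 0. Fix θ ∈ Γ, θ ≠ 0, with θ either a positive real number or θ = iβ, β ∈ (0,π), and let Γ'' denote Γ with one copy each of θ, −θ and 0 removed. Define B̃_N(z) := z^{−(N+1)/2}·∏_{γ∈Γ}(e^{γ/2^{k+1}}z + 1), B̃_{N−3}(z) := z^{−(N−3)/2}·∏_{γ∈Γ''}(e^{γ/2^{k+1}}z + 1), and w := e^{−θ/2^{k+1}}. Assume D := (e^{−θ/2^{k+2}} + e^{θ/2^{k+2}})·(e^{−θ/2^{k+1}} + e^{θ/2^{k+1}})·B̃_{N−3}(e^{θ/2^{k+1}}) ≠ 0. Then D⁻¹·B̃_N(w) = 2·e^{θ/2^{k+2}} and D⁻¹·B̃_N(w⁻¹) = 2·e^{−θ/2^{k+2}}; that is, with normalization factor K = D⁻¹ the normalized exponential B-spline symbol K·B̃_N satisfies the conditions for reproduction of {e^{θx}, e^{−θx}} with shift parameter p = −1/2. -/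
open Complex

/- Write `u = e^{θ/2^{k+1}} = v²` with `v = e^{θ/2^{k+2}}`, so that `w = u⁻¹`. Because `Γ` is
symmetric, `∏ (e^{γ/2^{k+1}} z⁻¹ + 1) = z^{-|Γ|} ∏ (e^{γ/2^{k+1}} z + 1)`; for `|Γ| = N` odd and
exponent `-(N+1)/2` this gives `B̃_N(u⁻¹) = u · B̃_N(u)`. At `u` the factors of `θ, -θ, 0` are
`u² + 1`, `2`, `u + 1`, and the remaining ones give `B̃_{N-3}(u)` up to `u⁻²`; comparing with `D`
yields `B̃_N(u) = 2 v⁻¹ D`, hence also `B̃_N(w) = 2 v D`. -/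

/-- The `k`-level symbol of the (not-normalized) exponential B-spline associated with
the multiset `Γ`: `z^E · ∏_{γ ∈ Γ} (e^{γ/2^{k+1}} z + 1)`. -/
noncomputable def expBSplineSymbol (k : ℕ) (E : ℤ) (Γ : Multiset ℂ) (z : ℂ) : ℂ :=
  z ^ E * (Γ.map (fun γ => Complex.exp (γ / 2 ^ (k + 1)) * z + 1)).prod

lemma Multiset.sum_eq_zero_of_map_neg_eq_self {K : Type*} [Field K] [CharZero K] {S : Multiset K}
    (hS : S.map (fun x => -x) = S) : S.sum = 0 := by
  have h := congrArg Multiset.sum hS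
  rw [Multiset.sum_map_neg'] at h
  linear_combination -h / 2

lemma prod_map_exp_div_eq_one_of_map_neg_eq_self {S : Multiset ℂ}
    (hS : S.map (fun x => -x) = S) (c : ℂ) : (S.map fun γ => exp (γ / c)).prod = 1 := by
  have h := exp_multiset_sum (S.map (· / c))
  rw [Multiset.map_map, Multiset.sum_map_div, Multiset.map_id',
    Multiset.sum_eq_zero_of_map_neg_eq_self hS, zero_div, exp_zero] at h
  exact h.symm

lemma prod_map_exp_div_mul_inv_add_one {S : Multiset ℂ} (hS : S.map (fun x => -x) = S)
    (c : ℂ) {z : ℂ} (hz : z ≠ 0) :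
    (S.map fun γ => exp (γ / c) * z⁻¹ + 1).prod =
      z⁻¹ ^ Multiset.card S * (S.map fun γ => exp (γ / c) * z + 1).prod := by
  have hfactor : ∀ γ : ℂ,
      exp (γ / c) * z⁻¹ + 1 = z⁻¹ * exp (γ / c) * (exp (-γ / c) * z + 1) := by
    intro γ
    rw [neg_div, exp_neg]
    field_simp
    ring
  have hreindex : (S.map fun γ => exp (-γ / c) * z + 1).prod =
      (S.map fun γ => exp (γ / c) * z + 1).prod := by
    conv_rhs => rw [← hS, Multiset.map_map]
    rfl
  simp_rw [hfactor, Multiset.prod_map_mul, Multiset.map_const', Multiset.prod_replicate,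
    prod_map_exp_div_eq_one_of_map_neg_eq_self hS, hreindex, mul_one]

lemma expBSplineSymbol_cons (k : ℕ) (E : ℤ) (a : ℂ) (Γ : Multiset ℂ) (z : ℂ) :
    expBSplineSymbol k E (a ::ₘ Γ) z =
      (exp (a / 2 ^ (k + 1)) * z + 1) * expBSplineSymbol k E Γ z := by
  simp only [expBSplineSymbol, Multiset.map_cons, Multiset.prod_cons]
  ring

lemma expBSplineSymbol_add_exponent (k : ℕ) (E F : ℤ) (Γ : Multiset ℂ) {z : ℂ}
    (hz : z ≠ 0) :
    expBSplineSymbol k (E + F) Γ z = z ^ F * expBSplineSymbol k E Γ z := by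
  rw [expBSplineSymbol, expBSplineSymbol, zpow_add₀ hz]
  ring

lemma expBSplineSymbol_inv {Γ : Multiset ℂ} (hΓ : Γ.map (fun x => -x) = Γ) (k : ℕ) (E : ℤ)
    {z : ℂ} (hz : z ≠ 0) :
    expBSplineSymbol k E Γ z⁻¹ =
      z ^ (-(2 * E + Multiset.card Γ)) * expBSplineSymbol k E Γ z := by
  rw [expBSplineSymbol, expBSplineSymbol, prod_map_exp_div_mul_inv_add_one hΓ _ hz,
    inv_zpow', inv_pow, ← zpow_natCast, ← zpow_neg, ← mul_assoc, ← mul_assoc,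
    ← zpow_add₀ hz, ← zpow_add₀ hz]
  congr 2
  ring

lemma expBSplineSymbol_cons_neg_cons_zero (k : ℕ) (E : ℤ) (θ : ℂ) (Γ : Multiset ℂ) :
    expBSplineSymbol k E (θ ::ₘ -θ ::ₘ 0 ::ₘ Γ) (exp (θ / 2 ^ (k + 1))) =
      2 * (exp (θ / 2 ^ (k + 1)) ^ 2 + 1) * (exp (θ / 2 ^ (k + 1)) + 1) *
        expBSplineSymbol k E Γ (exp (θ / 2 ^ (k + 1))) := by
  simp only [expBSplineSymbol_cons, neg_div, exp_neg, zero_div, exp_zero,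
    inv_mul_cancel₀ (exp_ne_zero _)]
  ring

theorem normalized_expBSpline_reproduction_odd_general (N k : ℕ) (hNodd : Odd N)
    (θ : ℂ)
    (Γ Γ'' : Multiset ℂ)
    (hcard : Multiset.card Γ = N)
    (hsym : Γ.map (fun x : ℂ => -x) = Γ)
    (hsplit : Γ = θ ::ₘ (-θ) ::ₘ (0 : ℂ) ::ₘ Γ'')
    (D : ℂ)
    (hDdef : D = (exp (-θ / 2 ^ (k + 2)) + exp (θ / 2 ^ (k + 2))) *
      (exp (-θ / 2 ^ (k + 1)) + exp (θ / 2 ^ (k + 1))) *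
      expBSplineSymbol k (-(((N - 3) / 2 : ℕ) : ℤ)) Γ'' (exp (θ / 2 ^ (k + 1))))
    (hD : D ≠ 0) :
    D⁻¹ * expBSplineSymbol k (-(((N + 1) / 2 : ℕ) : ℤ)) Γ (exp (-θ / 2 ^ (k + 1))) =
      2 * exp (θ / 2 ^ (k + 2)) ∧
    D⁻¹ * expBSplineSymbol k (-(((N + 1) / 2 : ℕ) : ℤ)) Γ (exp (-θ / 2 ^ (k + 1)))⁻¹ =
      2 * exp (-θ / 2 ^ (k + 2)) := by
  obtain ⟨n, rfl⟩ : ∃ n, N = 2 * n + 3 := by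
    obtain ⟨m, rfl⟩ := hNodd
    rw [hsplit] at hcard
    simp only [Multiset.card_cons] at hcard
    exact ⟨m - 1, by omega⟩
  have hE : ((2 * n + 3 + 1) / 2 : ℕ) = n + 2 := by omega
  have hE'' : ((2 * n + 3 - 3) / 2 : ℕ) = n := by omega
  set v := exp (θ / 2 ^ (k + 2))
  have hv : exp (θ / 2 ^ (k + 1)) = v ^ 2 := by
    rw [← exp_nat_mul, pow_succ 2 (k + 1)]
    push_cast
    ring_nf
  have hv' : exp (-θ / 2 ^ (k + 2)) = v⁻¹ := by rw [neg_div, exp_neg]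
  have hw : exp (-θ / 2 ^ (k + 1)) = (v ^ 2)⁻¹ := by rw [neg_div, exp_neg, hv]
  have hvalue : expBSplineSymbol k (-((n + 2 : ℕ) : ℤ)) Γ (v ^ 2) = 2 * v⁻¹ * D := by
    have hexponent : (-((n + 2 : ℕ) : ℤ)) = -(n : ℤ) + -2 := by push_cast; ring
    rw [hsplit, ← hv, expBSplineSymbol_cons_neg_cons_zero, hexponent,
      expBSplineSymbol_add_exponent _ _ _ _ (exp_ne_zero _), hDdef, hE'', hv', hw, hv]
    field_simp
    ring
  have hflip : expBSplineSymbol k (-((n + 2 : ℕ) : ℤ)) Γ (v ^ 2)⁻¹ =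
      v ^ 2 * expBSplineSymbol k (-((n + 2 : ℕ) : ℤ)) Γ (v ^ 2) := by
    rw [expBSplineSymbol_inv hsym _ _ (pow_ne_zero 2 (exp_ne_zero _)), hcard]
    congr 1
    convert zpow_one (v ^ 2) using 2
    push_cast
    ring
  rw [hE, hw, hv', inv_inv, hflip, hvalue]
  constructor <;> field_simp

/-- Odd-order case: with the normalization factor `K = D⁻¹`, the normalized exponential
B-spline symbol satisfies the conditions for reproduction of `{e^{θx}, e^{-θx}}` with
shift parameter `p = -1/2`, i.e. it takes the value `2·e^{θ/2^{k+2}}` at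
`w = e^{-θ/2^{k+1}}` and the value `2·e^{-θ/2^{k+2}}` at `w⁻¹`. -/
theorem normalized_expBSpline_reproduction_odd (N k : ℕ) (hN : 3 ≤ N) (hNodd : Odd N)
    (θ : ℂ) (hθ0 : θ ≠ 0)
    (hθ : (∃ t : ℝ, 0 < t ∧ θ = (t : ℂ)) ∨
          (∃ β : ℝ, 0 < β ∧ β < Real.pi ∧ θ = (β : ℂ) * I))
    (Γ Γ'' : Multiset ℂ)
    (hcard : Multiset.card Γ = N)
    (hsym : Γ.map (fun x : ℂ => -x) = Γ)
    (hsplit : Γ = θ ::ₘ (-θ) ::ₘ (0 : ℂ) ::ₘ Γ'')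
    (D : ℂ)
    (hDdef : D = (exp (-θ / 2 ^ (k + 2)) + exp (θ / 2 ^ (k + 2))) *
      (exp (-θ / 2 ^ (k + 1)) + exp (θ / 2 ^ (k + 1))) *
      expBSplineSymbol k (-(((N - 3) / 2 : ℕ) : ℤ)) Γ'' (exp (θ / 2 ^ (k + 1))))
    (hD : D ≠ 0) :
    D⁻¹ * expBSplineSymbol k (-(((N + 1) / 2 : ℕ) : ℤ)) Γ (exp (-θ / 2 ^ (k + 1))) =
      2 * exp (θ / 2 ^ (k + 2)) ∧
    D⁻¹ * expBSplineSymbol k (-(((N + 1) / 2 : ℕ) : ℤ)) Γ (exp (-θ / 2 ^ (k + 1)))⁻¹ =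
      2 * exp (-θ / 2 ^ (k + 2)) :=
  normalized_expBSpline_reproduction_odd_general N k hNodd θ Γ Γ'' hcard hsym hsplit D hDdef hD
end

section
/- Let ρ ≥ 1 and k ≥ 0 be integers, and let θ ∈ ℂ be either a positive real number or θ = iβ with β ∈ [0,π). Set v := (e^{θ/2^{k+1}} + e^{−θ/2^{k+1}})/2 (which is nonzero), and define for z ≠ 0: B(z) := (z + z⁻¹ + 2v)^ρ / (2^{2ρ−1}·v^ρ), c(z) := Σ_{j=0}^{ρ−1} (−1)^j·binom(ρ+j−1, j)·(4v)^{−j}·(z + z⁻¹ − 2v)^j, and a(z) := B(z)·c(z). Then a(z) + a(−z) = 2 for every z ≠ 0; that is, the exponential pseudo-spline symbol a = B·c is interpolatory. -/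
open Complex Finset

/-! With `v = cosh (θ / 2 ^ (k + 1))`, which is `cosh` of a real number or `cos` of an angle in
`[0, π/2)` and hence nonzero, put `x(z) = (z + z⁻¹ + 2v) / (4v)`. Then `B = 2 x^ρ`,
`c = ∑_{j<ρ} C(ρ-1+j, j) (1 - x)^j` and `x(-z) = 1 - x(z)`, so `a(z) + a(-z) = 2` is twice the
Daubechies identity `x^ρ ∑_{j<ρ} C(ρ-1+j, j) u^j + u^ρ ∑_{j<ρ} C(ρ-1+j, j) x^j = 1` for
`x + u = 1`, which follows by induction on `ρ` from Pascal's rule. -/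

section NegativeBinomial

variable {R : Type*} [CommRing R]

theorem one_sub_mul_sum_choose_mul_pow (m n : ℕ) (u : R) :
    (1 - u) * ∑ j ∈ range (n + 1), ((m + 1 + j).choose j : R) * u ^ j =
      ∑ j ∈ range (n + 1), ((m + j).choose j : R) * u ^ j
        - ((m + 1 + n).choose n : R) * u ^ (n + 1) := by
  induction n with
  | zero => simp
  | succ n ih =>
    have pascal : (m + 1 + (n + 1)).choose (n + 1) =
        (m + (n + 1)).choose (n + 1) + (m + 1 + n).choose n := by
      rw [show m + 1 + (n + 1) = m + 1 + n + 1 by omega, Nat.choose_succ_succ', add_comm,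
        show m + 1 + n = m + (n + 1) by omega]
    rw [sum_range_succ _ (n + 1), sum_range_succ _ (n + 1), mul_add, ih, pascal]
    push_cast
    ring

theorem pow_mul_sum_choose_add_pow_mul_sum_choose {x u : R} (h : x + u = 1) (m : ℕ) :
    x ^ (m + 1) * ∑ j ∈ range (m + 1), ((m + j).choose j : R) * u ^ j
      + u ^ (m + 1) * ∑ j ∈ range (m + 1), ((m + j).choose j : R) * x ^ j = 1 := by
  induction m with
  | zero => simpa using h
  | succ m ih =>
    have central : (m + 1 + (m + 1)).choose (m + 1) = 2 * (m + (m + 1)).choose (m + 1) := by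
      rw [show m + 1 + (m + 1) = 2 * m + 1 + 1 by omega, Nat.choose_succ_succ',
        ← Nat.choose_symm_half, show m + (m + 1) = 2 * m + 1 by omega]
      ring
    have recur_u := one_sub_mul_sum_choose_mul_pow m (m + 1) u
    have recur_x := one_sub_mul_sum_choose_mul_pow m (m + 1) x
    rw [← h, add_sub_cancel_right] at recur_u
    rw [← h, add_sub_cancel_left] at recur_x
    simp only [sum_range_succ _ (m + 1), central, Nat.cast_mul, Nat.cast_ofNat] at recur_u recur_x ⊢
    linear_combination x ^ (m + 1) * recur_u + u ^ (m + 1) * recur_x + ih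
      - 2 * ((m + (m + 1)).choose (m + 1) : R) * (x * u) ^ (m + 1) * h

end NegativeBinomial

theorem Complex.cosh_ofReal_ne_zero (t : ℝ) : cosh (t : ℂ) ≠ 0 := by
  rw [← ofReal_cosh]
  exact_mod_cast (Real.cosh_pos t).ne'

theorem Complex.cosh_ofReal_mul_I_ne_zero {φ : ℝ}
    (hφ : φ ∈ Set.Ioo (-(Real.pi / 2)) (Real.pi / 2)) : cosh (φ * I) ≠ 0 := by
  rw [cosh_mul_I, ← ofReal_cos]
  exact_mod_cast (Real.cos_pos_of_mem_Ioo hφ).ne'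

theorem Complex.cosh_div_two_pow_succ_ne_zero {θ : ℂ}
    (hθ : (∃ t : ℝ, θ = t) ∨ ∃ β : ℝ, 0 ≤ β ∧ β < Real.pi ∧ θ = β * I) (k : ℕ) :
    cosh (θ / 2 ^ (k + 1)) ≠ 0 := by
  rcases hθ with ⟨t, rfl⟩ | ⟨β, hβ0, hβπ, rfl⟩
  · exact_mod_cast cosh_ofReal_ne_zero (t / 2 ^ (k + 1))
  · have hφ : β / 2 ^ (k + 1) ∈ Set.Ioo (-(Real.pi / 2)) (Real.pi / 2) := by
      have h2 : (2 : ℝ) ≤ 2 ^ (k + 1) := le_self_pow₀ one_le_two (by omega)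
      constructor
      · have := Real.pi_pos
        have : 0 ≤ β / 2 ^ (k + 1) := by positivity
        linarith
      · calc β / 2 ^ (k + 1) ≤ β / 2 := div_le_div_of_nonneg_left hβ0 two_pos h2
          _ < Real.pi / 2 := by linarith
    convert cosh_ofReal_mul_I_ne_zero hφ using 2
    push_cast
    ring

section SymbolAlgebra

variable {K : Type*} [Field K]

theorem pow_div_two_pow_mul_pow_eq (h2 : (2 : K) ≠ 0) (m : ℕ) (w v : K) :
    w ^ (m + 1) / (2 ^ (2 * (m + 1) - 1) * v ^ (m + 1)) = 2 * (w / (4 * v)) ^ (m + 1) := by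
  have four_pow : (4 : K) ^ (m + 1) = 2 * 2 ^ (2 * m + 1) := by
    rw [show (4 : K) = 2 ^ 2 by norm_num, ← pow_mul]
    ring
  rw [show 2 * (m + 1) - 1 = 2 * m + 1 by omega, div_pow, mul_pow, four_pow]
  field_simp

theorem neg_one_pow_mul_mul_zpow_neg_mul_pow (j : ℕ) (c w d : K) :
    (-1) ^ j * c * d ^ (-(j : ℤ)) * w ^ j = c * (-w / d) ^ j := by
  rw [zpow_neg, zpow_natCast, div_pow, neg_pow]
  ring

end SymbolAlgebra

/-- The exponential pseudo-spline symbol `a = B·c` of order `N = 2ρ` associated with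
`Γ = {(θ,ρ), (-θ,ρ)}` is interpolatory: `a(z) + a(-z) = 2` for all `z ≠ 0`.
(Moreover `v ≠ 0`.) -/
theorem exponential_pseudoSpline_interpolatory_example (ρ k : ℕ) (hρ : 1 ≤ ρ)
    (θ : ℂ)
    (hθ : (∃ t : ℝ, 0 < t ∧ θ = (t : ℂ)) ∨
          (∃ β : ℝ, 0 ≤ β ∧ β < Real.pi ∧ θ = (β : ℂ) * I))
    (v : ℂ) (hv : v = (exp (θ / 2 ^ (k + 1)) + exp (-θ / 2 ^ (k + 1))) / 2)
    (B c a : ℂ → ℂ)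
    (hB : ∀ z : ℂ, z ≠ 0 → B z = (z + z⁻¹ + 2 * v) ^ ρ / (2 ^ (2 * ρ - 1) * v ^ ρ))
    (hc : ∀ z : ℂ, z ≠ 0 → c z = ∑ j ∈ range ρ,
      (-1 : ℂ) ^ j * (((ρ + j - 1).choose j : ℕ) : ℂ) * (4 * v) ^ (-(j : ℤ)) *
        (z + z⁻¹ - 2 * v) ^ j)
    (ha : ∀ z : ℂ, z ≠ 0 → a z = B z * c z) :
    v ≠ 0 ∧ ∀ z : ℂ, z ≠ 0 → a z + a (-z) = 2 := by
  have hv0 : v ≠ 0 := by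
    rw [hv, neg_div]
    exact cosh_div_two_pow_succ_ne_zero (hθ.imp (fun ⟨t, _, ht⟩ => ⟨t, ht⟩) id) k
  refine ⟨hv0, fun z hz => ?_⟩
  obtain ⟨m, rfl⟩ : ∃ m, ρ = m + 1 := ⟨ρ - 1, by omega⟩
  set x : ℂ → ℂ := fun w => (w + w⁻¹ + 2 * v) / (4 * v) with hx
  have ha_eq (w : ℂ) (hw : w ≠ 0) :
      a w = 2 * x w ^ (m + 1) * ∑ j ∈ range (m + 1), ((m + j).choose j : ℂ) * (1 - x w) ^ j := by
    rw [ha w hw, hB w hw, hc w hw, pow_div_two_pow_mul_pow_eq two_ne_zero]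
    congr 1
    refine sum_congr rfl fun j _ => ?_
    rw [neg_one_pow_mul_mul_zpow_neg_mul_pow, show m + 1 + j - 1 = m + j by omega]
    congr 2
    simp only [hx]
    field_simp
    ring
  have hx_neg : x (-z) = 1 - x z := by
    simp only [hx, inv_neg]
    field_simp
    ring
  rw [ha_eq z hz, ha_eq (-z) (neg_ne_zero.2 hz), hx_neg, sub_sub_cancel]
  linear_combination 2 * pow_mul_sum_choose_add_pow_mul_sum_choose (add_sub_cancel (x z) 1) m
end
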